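/- (Dimension 40 case of the main theorem.) Define P₄₀(z) = (1 − z)⁵ − (75/16)(1 − z)² z². For every real y > 0, P₄₀(z(y)) ≥ P₄₀(1/4) > 0; consequently the secrecy function Ξ(y) = P₄₀(z(y))^{-1} of the extremal even unimodular lattice in dimension 40 satisfies Ξ(y) ≤ Ξ(1) = P₄₀(1/4)^{-1}. -/
import Mathlib

open Real Complex

set_option maxHeartbeats 1000000

/-- Jacobi theta constant θ₂ on the imaginary axis. -/
noncomputable def theta2 (y : ℝ) : ℝ := ∑' n : ℤ, Real.exp (-Real.pi * y * (n + 1/2)^2)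

/-- Jacobi theta constant θ₃ on the imaginary axis. -/
noncomputable def theta3 (y : ℝ) : ℝ := ∑' n : ℤ, Real.exp (-Real.pi * y * n^2)

/-- Jacobi theta constant θ₄ on the imaginary axis. -/
noncomputable def theta4 (y : ℝ) : ℝ := ∑' n : ℤ, (-1 : ℝ)^n * Real.exp (-Real.pi * y * n^2)

/-- The function z(y) = θ₂(y)⁴θ₄(y)⁴/θ₃(y)⁸. -/
noncomputable def zfun (y : ℝ) : ℝ := theta2 y ^ 4 * theta4 y ^ 4 / theta3 y ^ 8

/-- Denominator polynomial of the secrecy function of the extremal even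
unimodular lattice in dimension 40. -/
noncomputable def P40 (z : ℝ) : ℝ := (1 - z) ^ 5 - 75 / 16 * (1 - z) ^ 2 * z ^ 2

lemma neg_one_zpow_abs (n : ℤ) : |(-1 : ℝ)^n| = 1 := by
  rcases Int.even_or_odd n with h | h
  · rw [h.neg_one_zpow]; norm_num
  · rw [h.neg_one_zpow]; norm_num

lemma neg_one_zpow_add (a b : ℤ) : (-1:ℝ)^(a+b) = (-1:ℝ)^a * (-1:ℝ)^b :=
  zpow_add₀ (by norm_num) a b

lemma summable3 {y : ℝ} (hy : 0 < y) : Summable fun n : ℤ => rexp (-π * y * n ^ 2) := by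
  have h := summable_pow_mul_jacobiTheta₂_term_bound 0 hy 0
  refine h.congr fun n => ?_
  simp [pow_zero]
  ring_nf

lemma summable2 {y : ℝ} (hy : 0 < y) :
    Summable fun n : ℤ => rexp (-π * y * ((n : ℝ) + 1/2) ^ 2) := by
  have h := summable_pow_mul_jacobiTheta₂_term_bound (y/2) hy 0
  refine Summable.of_nonneg_of_le (fun n => (exp_pos _).le) (fun n => ?_) h
  rw [pow_zero, one_mul, exp_le_exp]
  have key : y * ((n:ℝ)^2 - |(n:ℝ)|) ≤ y * (((n:ℝ)+1/2)^2) := by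
    have : -|(n:ℝ)| ≤ (n:ℝ) := neg_abs_le _
    nlinarith
  have := mul_le_mul_of_nonneg_left key Real.pi_pos.le
  push_cast
  nlinarith

lemma summable4 {y : ℝ} (hy : 0 < y) :
    Summable fun n : ℤ => (-1:ℝ)^n * rexp (-π * y * n ^ 2) := by
  refine Summable.of_abs ?_
  refine (summable3 hy).congr fun n => ?_
  rw [abs_mul, neg_one_zpow_abs, one_mul, abs_of_pos (exp_pos _)]

lemma theta3_pos {y : ℝ} (hy : 0 < y) : 0 < theta3 y := by
  have h := summable3 hy
  have h0 : (0:ℝ) < rexp (-π * y * (0:ℤ)^2) := exp_pos _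
  calc (0:ℝ) < rexp (-π * y * (0:ℤ)^2) := h0
    _ ≤ theta3 y := Summable.le_tsum h 0 fun n _ => (exp_pos _).le

lemma theta2_pos {y : ℝ} (hy : 0 < y) : 0 < theta2 y := by
  have h := summable2 hy
  calc (0:ℝ) < rexp (-π * y * ((0:ℤ) + 1/2)^2) := exp_pos _
    _ ≤ theta2 y := Summable.le_tsum h 0 fun n _ => (exp_pos _).le

lemma norm3 {y : ℝ} (hy : 0 < y) : Summable fun n : ℤ => ‖rexp (-π * y * n ^ 2)‖ :=
  (summable3 hy).congr fun n => (Real.norm_of_nonneg (exp_pos _).le).symm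

lemma norm2 {y : ℝ} (hy : 0 < y) :
    Summable fun n : ℤ => ‖rexp (-π * y * ((n : ℝ) + 1/2) ^ 2)‖ :=
  (summable2 hy).congr fun n => (Real.norm_of_nonneg (exp_pos _).le).symm

lemma norm4 {y : ℝ} (hy : 0 < y) :
    Summable fun n : ℤ => ‖(-1:ℝ)^n * rexp (-π * y * n ^ 2)‖ :=
  (summable3 hy).congr fun n => by
    rw [norm_mul, Real.norm_eq_abs, neg_one_zpow_abs, one_mul,
      Real.norm_of_nonneg (exp_pos _).le]

lemma theta3_sq {y : ℝ} (hy : 0 < y) :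
    theta3 y ^ 2 = ∑' p : ℤ × ℤ, rexp (-π * y * p.1 ^ 2) * rexp (-π * y * p.2 ^ 2) := by
  rw [sq, theta3, tsum_mul_tsum_of_summable_norm (norm3 hy) (norm3 hy)]

lemma theta4_sq {y : ℝ} (hy : 0 < y) :
    theta4 y ^ 2 = ∑' p : ℤ × ℤ,
      ((-1:ℝ)^p.1 * rexp (-π * y * p.1 ^ 2)) * ((-1:ℝ)^p.2 * rexp (-π * y * p.2 ^ 2)) := by
  rw [sq, theta4, tsum_mul_tsum_of_summable_norm (norm4 hy) (norm4 hy)]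

lemma theta2_sq {y : ℝ} (hy : 0 < y) :
    theta2 y ^ 2 = ∑' p : ℤ × ℤ,
      rexp (-π * y * ((p.1:ℝ) + 1/2) ^ 2) * rexp (-π * y * ((p.2:ℝ) + 1/2) ^ 2) := by
  rw [sq, theta2, tsum_mul_tsum_of_summable_norm (norm2 hy) (norm2 hy)]

lemma inj_odd : Function.Injective (fun uv : ℤ × ℤ => (uv.1 + uv.2 + 1, uv.1 - uv.2)) := by
  intro a b h
  simp only [Prod.mk.injEq] at h
  exact Prod.ext (by omega) (by omega)

lemma inj_even : Function.Injective (fun uv : ℤ × ℤ => (uv.1 + uv.2, uv.1 - uv.2)) := by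
  intro a b h
  simp only [Prod.mk.injEq] at h
  have h2 : a.1 + a.2 = b.1 + b.2 ∧ a.1 - a.2 = b.1 - b.2 := h
  exact Prod.ext (by omega) (by omega)

/-- Identity A: θ₃(y)² − θ₄(y)² = 2 θ₂(2y)². -/
lemma identA {y : ℝ} (hy : 0 < y) : theta3 y ^ 2 - theta4 y ^ 2 = 2 * theta2 (2*y) ^ 2 := by
  have hS3 : Summable fun p : ℤ × ℤ => rexp (-π * y * p.1 ^ 2) * rexp (-π * y * p.2 ^ 2) :=
    summable_mul_of_summable_norm (norm3 hy) (norm3 hy)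
  have hS4 : Summable fun p : ℤ × ℤ =>
      ((-1:ℝ)^p.1 * rexp (-π * y * p.1 ^ 2)) * ((-1:ℝ)^p.2 * rexp (-π * y * p.2 ^ 2)) :=
    summable_mul_of_summable_norm (norm4 hy) (norm4 hy)
  have h1 : theta3 y ^ 2 - theta4 y ^ 2 = ∑' p : ℤ × ℤ,
      (1 - (-1:ℝ)^(p.1 + p.2)) * (rexp (-π * y * p.1 ^ 2) * rexp (-π * y * p.2 ^ 2)) := by
    rw [theta3_sq hy, theta4_sq hy, ← Summable.tsum_sub hS3 hS4]
    refine tsum_congr fun p => ?_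
    rw [neg_one_zpow_add]
    ring
  rw [h1]
  set F : ℤ × ℤ → ℝ := fun p =>
    (1 - (-1:ℝ)^(p.1 + p.2)) * (rexp (-π * y * p.1 ^ 2) * rexp (-π * y * p.2 ^ 2)) with hF
  have hsupp : Function.support F ⊆ Set.range (fun uv : ℤ × ℤ => (uv.1 + uv.2 + 1, uv.1 - uv.2)) := by
    intro p hp
    rcases Int.even_or_odd (p.1 + p.2) with he | ho
    · exfalso; apply hp; simp only [hF, he.neg_one_zpow]; ring
    · obtain ⟨k, hk⟩ := ho
      exact ⟨(k, p.1 - k - 1), Prod.ext (by simp; omega) (by simp; omega)⟩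
  rw [← Function.Injective.tsum_eq inj_odd hsupp]
  have key : ∀ uv : ℤ × ℤ, F (uv.1 + uv.2 + 1, uv.1 - uv.2) =
      2 * (rexp (-π * (2*y) * ((uv.1:ℝ) + 1/2) ^ 2) * rexp (-π * (2*y) * ((uv.2:ℝ) + 1/2) ^ 2)) := by
    intro uv
    have hodd : Odd (uv.1 + uv.2 + 1 + (uv.1 - uv.2)) := ⟨uv.1, by ring⟩
    simp only [hF]
    rw [hodd.neg_one_zpow, ← Real.exp_add, ← Real.exp_add]
    congr 1
    · norm_num
    · congr 1
      push_cast
      ring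
  rw [tsum_congr key, tsum_mul_left, ← tsum_mul_tsum_of_summable_norm (norm2 (by linarith)) (norm2 (by linarith)), ← sq]
  rfl

/-- Identity B: θ₃(y)² + θ₄(y)² = 2 θ₃(2y)². -/
lemma identB {y : ℝ} (hy : 0 < y) : theta3 y ^ 2 + theta4 y ^ 2 = 2 * theta3 (2*y) ^ 2 := by
  have hS3 : Summable fun p : ℤ × ℤ => rexp (-π * y * p.1 ^ 2) * rexp (-π * y * p.2 ^ 2) :=
    summable_mul_of_summable_norm (norm3 hy) (norm3 hy)
  have hS4 : Summable fun p : ℤ × ℤ =>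
      ((-1:ℝ)^p.1 * rexp (-π * y * p.1 ^ 2)) * ((-1:ℝ)^p.2 * rexp (-π * y * p.2 ^ 2)) :=
    summable_mul_of_summable_norm (norm4 hy) (norm4 hy)
  have h1 : theta3 y ^ 2 + theta4 y ^ 2 = ∑' p : ℤ × ℤ,
      (1 + (-1:ℝ)^(p.1 + p.2)) * (rexp (-π * y * p.1 ^ 2) * rexp (-π * y * p.2 ^ 2)) := by
    rw [theta3_sq hy, theta4_sq hy, ← Summable.tsum_add hS3 hS4]
    refine tsum_congr fun p => ?_
    rw [neg_one_zpow_add]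
    ring
  rw [h1]
  set F : ℤ × ℤ → ℝ := fun p =>
    (1 + (-1:ℝ)^(p.1 + p.2)) * (rexp (-π * y * p.1 ^ 2) * rexp (-π * y * p.2 ^ 2)) with hF
  have hsupp : Function.support F ⊆ Set.range (fun uv : ℤ × ℤ => (uv.1 + uv.2, uv.1 - uv.2)) := by
    intro p hp
    rcases Int.even_or_odd (p.1 + p.2) with he | ho
    · obtain ⟨k, hk⟩ := he
      exact ⟨(k, p.1 - k), Prod.ext (by simp only []; omega) (by simp only []; omega)⟩
    · exfalso; apply hp; simp only [hF, ho.neg_one_zpow]; ring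
  rw [← Function.Injective.tsum_eq inj_even hsupp]
  have key : ∀ uv : ℤ × ℤ, F (uv.1 + uv.2, uv.1 - uv.2) =
      2 * (rexp (-π * (2*y) * (uv.1:ℝ) ^ 2) * rexp (-π * (2*y) * (uv.2:ℝ) ^ 2)) := by
    intro uv
    have heven : Even (uv.1 + uv.2 + (uv.1 - uv.2)) := ⟨uv.1, by ring⟩
    simp only [hF]
    rw [heven.neg_one_zpow, ← Real.exp_add, ← Real.exp_add]
    congr 1
    · norm_num
    · congr 1
      push_cast
      ring
  rw [tsum_congr key, tsum_mul_left, ← tsum_mul_tsum_of_summable_norm (norm3 (by linarith)) (norm3 (by linarith)), ← sq]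
  rfl

/-- Identity C: θ₂(y)² = 2 θ₂(2y) θ₃(2y). -/
lemma identC {y : ℝ} (hy : 0 < y) : theta2 y ^ 2 = 2 * (theta2 (2*y) * theta3 (2*y)) := by
  have hy2 : (0:ℝ) < y / 2 := by linarith
  have h2y : (0:ℝ) < 2 * y := by linarith
  set E : ℤ × ℤ → ℝ := fun p =>
    rexp (-π * (y/2) * (p.1:ℝ) ^ 2) * rexp (-π * (y/2) * (p.2:ℝ) ^ 2) with hE
  set T : ℤ × ℤ → ℝ := fun p => if (p.1 + p.2) % 2 = 1 then E p else 0 with hT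
  set T₁ : ℤ × ℤ → ℝ := fun p => if p.1 % 2 = 1 ∧ p.2 % 2 = 0 then E p else 0 with hT₁
  set T₂ : ℤ × ℤ → ℝ := fun p => if p.1 % 2 = 0 ∧ p.2 % 2 = 1 then E p else 0 with hT₂
  have hEnn : ∀ p, 0 ≤ E p := fun p => mul_nonneg (exp_pos _).le (exp_pos _).le
  have hES : Summable E := summable_mul_of_summable_norm (norm3 hy2) (norm3 hy2)
  have ifsum : ∀ (c : ℤ × ℤ → Prop) (_ : DecidablePred c),
      Summable (fun p => if c p then E p else 0) := by
    intro c hc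
    apply hES.of_nonneg_of_le
    · intro p; by_cases h : c p <;> simp [h, hEnn p]
    · intro p; by_cases h : c p <;> simp [h, hEnn p]
  have hTS : Summable T := ifsum _ _
  have hT1S : Summable T₁ := ifsum _ _
  have hT2S : Summable T₂ := ifsum _ _
  -- Step 1 : θ₂(y)² = ∑ T
  have step1 : theta2 y ^ 2 = ∑' p : ℤ × ℤ, T p := by
    have hsupp : Function.support T ⊆
        Set.range (fun uv : ℤ × ℤ => (uv.1 + uv.2 + 1, uv.1 - uv.2)) := by
      intro p hp
      have h : (p.1 + p.2) % 2 = 1 := by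
        by_contra h; apply hp; simp only [hT]; exact if_neg h
      exact ⟨((p.1 + p.2 - 1)/2, p.1 - (p.1 + p.2 - 1)/2 - 1),
        Prod.ext (by simp only []; omega) (by simp only []; omega)⟩
    rw [← Function.Injective.tsum_eq inj_odd hsupp, theta2_sq hy]
    refine tsum_congr fun uv => ?_
    have h : ((uv.1 + uv.2 + 1) + (uv.1 - uv.2)) % 2 = 1 := by omega
    simp only [hT, hE, h, if_true, ← Real.exp_add]
    congr 1
    push_cast
    ring
  -- Step 2 : T = T₁ + T₂
  have step2 : ∀ p, T p = T₁ p + T₂ p := by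
    intro p
    simp only [hT, hT₁, hT₂, hE]
    split_ifs
    all_goals try ring
    all_goals exfalso; omega
  -- Step 3 : ∑ T₁ = θ₂(2y)·θ₃(2y)
  have inj1 : Function.Injective (fun ab : ℤ × ℤ => ((2*ab.1 + 1 : ℤ), (2*ab.2 : ℤ))) := by
    intro a b h
    simp only [Prod.mk.injEq] at h
    exact Prod.ext (by omega) (by omega)
  have step3 : ∑' p : ℤ × ℤ, T₁ p = theta2 (2*y) * theta3 (2*y) := by
    have hsupp : Function.support T₁ ⊆
        Set.range (fun ab : ℤ × ℤ => ((2*ab.1 + 1 : ℤ), (2*ab.2 : ℤ))) := by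
      intro p hp
      have h : p.1 % 2 = 1 ∧ p.2 % 2 = 0 := by
        by_contra h; apply hp; simp only [hT₁]; exact if_neg h
      exact ⟨((p.1 - 1)/2, p.2/2), Prod.ext (by simp only []; omega) (by simp only []; omega)⟩
    rw [← Function.Injective.tsum_eq inj1 hsupp,
      theta2, theta3, tsum_mul_tsum_of_summable_norm (norm2 h2y) (norm3 h2y)]
    refine tsum_congr fun ab => ?_
    have h : (2*ab.1 + 1) % 2 = 1 ∧ (2*ab.2) % 2 = 0 := by omega
    simp only [hT₁, hE, h, and_self, if_true]
    rw [← Real.exp_add, ← Real.exp_add]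
    congr 1
    push_cast
    ring
  have inj2 : Function.Injective (fun ab : ℤ × ℤ => ((2*ab.2 : ℤ), (2*ab.1 + 1 : ℤ))) := by
    intro a b h
    simp only [Prod.mk.injEq] at h
    exact Prod.ext (by omega) (by omega)
  have step4 : ∑' p : ℤ × ℤ, T₂ p = theta2 (2*y) * theta3 (2*y) := by
    have hsupp : Function.support T₂ ⊆
        Set.range (fun ab : ℤ × ℤ => ((2*ab.2 : ℤ), (2*ab.1 + 1 : ℤ))) := by
      intro p hp
      have h : p.1 % 2 = 0 ∧ p.2 % 2 = 1 := by
        by_contra h; apply hp; simp only [hT₂]; exact if_neg h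
      exact ⟨((p.2 - 1)/2, p.1/2), Prod.ext (by simp only []; omega) (by simp only []; omega)⟩
    rw [← Function.Injective.tsum_eq inj2 hsupp,
      theta2, theta3, tsum_mul_tsum_of_summable_norm (norm2 h2y) (norm3 h2y)]
    refine tsum_congr fun ab => ?_
    have h : (2*ab.2) % 2 = 0 ∧ (2*ab.1 + 1) % 2 = 1 := by omega
    simp only [hT₂, hE, h, and_self, if_true]
    rw [← Real.exp_add, ← Real.exp_add]
    congr 1
    push_cast
    ring
  rw [step1, tsum_congr step2, Summable.tsum_add hT1S hT2S, step3, step4]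
  ring

lemma theta4_eq {y : ℝ} (hy : 0 < y) : (theta4 y : ℂ) = jacobiTheta₂ (1/2) (y * I) := by
  rw [theta4, jacobiTheta₂]
  rw [Complex.ofReal_tsum _]
  refine tsum_congr fun n => ?_
  rw [jacobiTheta₂_term]
  have h1 : 2 * (π:ℂ) * I * n * (1/2) + π * I * n^2 * (y * I) =
      (n : ℂ) * (π * I) + (-π * y * n^2 : ℝ) := by
    push_cast
    ring_nf
    rw [Complex.I_sq]
    ring
  rw [h1, Complex.exp_add, Complex.exp_int_mul, Complex.exp_pi_mul_I, ← Complex.ofReal_exp]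
  push_cast
  ring

lemma theta2_eq {y : ℝ} (hy : 0 < y) :
    (theta2 y : ℂ) = Complex.exp (-π * y / 4) * jacobiTheta₂ (y * I / 2) (y * I) := by
  rw [theta2, jacobiTheta₂, ← tsum_mul_left]
  rw [Complex.ofReal_tsum _]
  refine tsum_congr fun n => ?_
  rw [jacobiTheta₂_term, ← Complex.exp_add]
  have h1 : (-π * y / 4 : ℂ) + (2 * π * I * n * (y * I / 2) + π * I * n^2 * (y * I)) =
      ((-π * y * ((n:ℝ) + 1/2)^2 : ℝ) : ℂ) := by
    push_cast
    ring_nf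
    rw [Complex.I_sq]
    ring
  rw [h1, ← Complex.ofReal_exp]

lemma theta2_one_eq_theta4_one : theta2 1 = theta4 1 := by
  have h2 : (theta2 1 : ℂ) = Complex.exp (-π/4) * jacobiTheta₂ (I/2) I := by
    have := theta2_eq (y := 1) one_pos
    simpa using this
  have h4 : (theta4 1 : ℂ) = jacobiTheta₂ (1/2) I := by
    have := theta4_eq (y := 1) one_pos
    simpa using this
  have hfe := jacobiTheta₂_functional_equation (I/2) I
  have e1 : (-I * I : ℂ) = 1 := by simp [Complex.I_mul_I]
  have e2 : ((1:ℂ)) ^ ((1:ℂ)/2) = 1 := Complex.one_cpow _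
  have e3 : (-(π:ℂ) * I * (I/2)^2 / I) = (π/4 : ℂ) := by
    rw [show ((I/2)^2 : ℂ) = -(1/4) by rw [div_pow, Complex.I_sq]; norm_num]
    rw [show (-(π:ℂ) * I * -(1/4) : ℂ) = (π/4) * I by ring, mul_div_assoc,
      div_self Complex.I_ne_zero, mul_one]
  have e4 : ((I/2)/I : ℂ) = 1/2 := by
    rw [div_div, mul_comm, ← div_div, div_self Complex.I_ne_zero]
  have e5 : (-1/I : ℂ) = I := by
    rw [div_I]
    ring
  rw [e1, e2, e3, e4, e5] at hfe
  have : (theta2 1 : ℂ) = (theta4 1 : ℂ) := by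
    rw [h2, h4, hfe, one_div_one, one_mul, ← mul_assoc, ← Complex.exp_add,
      show (-(π:ℂ)/4 + π/4 : ℂ) = 0 by ring, Complex.exp_zero, one_mul]
  exact_mod_cast this

lemma jacobi_identity {y : ℝ} (hy : 0 < y) :
    theta2 y ^ 4 + theta4 y ^ 4 = theta3 y ^ 4 := by
  linear_combination (theta2 y ^ 2 + 2 * theta2 (2*y) * theta3 (2*y)) * identC hy
    - (theta3 y ^ 2 + theta4 y ^ 2) * identA hy - 2 * theta2 (2*y) ^ 2 * identB hy

lemma zfun_nonneg (y : ℝ) : 0 ≤ zfun y := by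
  unfold zfun; positivity

lemma zfun_le {y : ℝ} (hy : 0 < y) : zfun y ≤ 1 / 4 := by
  have hc := theta3_pos hy
  have hj := jacobi_identity hy
  have hd : (0:ℝ) < theta3 y ^ 8 := by positivity
  have h8 : theta3 y ^ 8 = (theta2 y ^ 4 + theta4 y ^ 4)^2 := by rw [hj]; ring
  rw [zfun, div_le_iff₀ hd, h8]
  nlinarith [sq_nonneg (theta2 y ^ 4 - theta4 y ^ 4)]

lemma zfun_one : zfun 1 = 1 / 4 := by
  have hj := jacobi_identity one_pos
  rw [← theta2_one_eq_theta4_one] at hj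
  have h2 := theta2_pos one_pos
  rw [zfun, ← theta2_one_eq_theta4_one]
  have h8 : theta3 1 ^ 8 = 4 * theta2 1 ^ 8 := by
    have h : theta3 1 ^ 8 = (theta3 1 ^ 4) ^ 2 := by ring
    rw [h, ← hj]; ring
  rw [h8]
  field_simp

lemma P40_pos : 0 < P40 (1/4) := by unfold P40; norm_num

lemma P40_min {z : ℝ} (h0 : 0 ≤ z) (h4 : z ≤ 1/4) : P40 (1/4) ≤ P40 z := by
  unfold P40
  nlinarith [sq_nonneg z, sq_nonneg (1/4 - z), mul_nonneg h0 (sub_nonneg.2 h4),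
    sq_nonneg (z * (1/4 - z)), mul_nonneg (mul_nonneg h0 h0) (sub_nonneg.2 h4)]

theorem secrecy_dim40 :
    (∀ y : ℝ, 0 < y → P40 (1 / 4) ≤ P40 (zfun y)) ∧ 0 < P40 (1 / 4) ∧
      (∀ y : ℝ, 0 < y → (P40 (zfun y))⁻¹ ≤ (P40 (zfun 1))⁻¹) ∧
      (P40 (zfun 1))⁻¹ = (P40 (1 / 4))⁻¹ := by
  have hmain : ∀ y : ℝ, 0 < y → P40 (1 / 4) ≤ P40 (zfun y) :=
    fun y hy => P40_min (zfun_nonneg y) (zfun_le hy)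
  refine ⟨hmain, P40_pos, fun y hy => ?_, by rw [zfun_one]⟩
  rw [zfun_one]
  exact inv_anti₀ P40_pos (hmain y hy)
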